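/- Let x_r, x_g, x_b be variables in a noncommutative ℤ[q^{±1/2}]-algebra satisfying x_r x_g = q x_g x_r, x_r x_b = q^{-1} x_b x_r, x_g x_b = q^{-1} x_b x_g, with q central. Then for every N, the product ∏_{j} (1 + q^j x_r + q^{-j} x_g + q^j x_b), taken over j ∈ {-(N-1)/2, -(N-1)/2+1, ..., (N-1)/2} in increasing order, when expanded and written with each monomial in the normal order x_r^{β} x_g^{γ} x_b^{α} (up to a power of q), has coefficient of the normally ordered monomial such that the total coefficient of x_r^{b} x_g^{c} x_b^{a} equals the symmetric quantum multinomial [N]!/([a]![b]![c]![N-a-b-c]!). -/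

import Mathlib

/-!
Expand the product one factor at a time, keeping every term in the normal order
`x_r^b x_g^c x_b^a`. Multiplying a normal monomial on the right by a generator raises one
exponent at the cost of a power of `q^{1/2}` that depends only on the exponents, so the
coefficients obey a four-term recursion in `N`. For the factors with exponents
`m, m + 2, …, m + 2(N - 1)`, splitting off the power `s^((m+N-1)(a+b-c) + ab + ac - bc)` turns
this recursion into a quantum Pascal rule for `[N; a, b, c]`. Multiplied by `[N+1]`, that rule
becomes `s^(a+b-c) [n] = [d] + s^(n+a-c) [b] + s^(a+b-n) [c] + s^(n-b-c) [a]` for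
`n = a + b + c + d`, which is checked by clearing the denominator `s - s⁻¹`.
-/

open Finset

/-- `q^{1/2}`, as the generator of the field `K = ℚ(q^{1/2})`. -/
noncomputable def s : RatFunc ℚ := RatFunc.X

/-- The symmetric quantum integer `[n] = (q^{n/2} - q^{-n/2})/(q^{1/2} - q^{-1/2})`. -/
noncomputable def qint (n : ℕ) : RatFunc ℚ := (s ^ n - s⁻¹ ^ n) / (s - s⁻¹)

/-- The symmetric quantum factorial `[n]! = ∏_{j=1}^n [j]`. -/
noncomputable def qfact : ℕ → RatFunc ℚ
  | 0 => 1
  | n + 1 => qfact n * qint (n + 1)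

/-- The symmetric quantum multinomial `[N]!/([a]![b]![c]![N-a-b-c]!)`,
set to `0` when `a + b + c > N`. -/
noncomputable def qmultinom (N a b c : ℕ) : RatFunc ℚ :=
  if a + b + c ≤ N then
    qfact N / (qfact a * qfact b * qfact c * qfact (N - a - b - c)) else 0

lemma s_ne_zero : s ≠ 0 := RatFunc.X_ne_zero

lemma s_pow_ne_one {n : ℕ} (hn : n ≠ 0) : s ^ n ≠ 1 := by
  rw [s, ← RatFunc.algebraMap_X, ← map_pow, ← map_one (algebraMap (Polynomial ℚ) (RatFunc ℚ)),
    Ne, (IsFractionRing.injective (Polynomial ℚ) (RatFunc ℚ)).eq_iff]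
  intro h
  simpa [hn] using congrArg Polynomial.natDegree h

lemma qint_zero : qint 0 = 0 := by simp [qint]

lemma qint_ne_zero {n : ℕ} (hn : n ≠ 0) : qint n ≠ 0 := by
  have key : ∀ k : ℕ, k ≠ 0 → s ^ k - s⁻¹ ^ k ≠ 0 := fun k hk h ↦ by
    refine s_pow_ne_one (n := k + k) (by omega) ?_
    rw [pow_add]
    nth_rw 2 [sub_eq_zero.mp h]
    rw [← mul_pow, mul_inv_cancel₀ s_ne_zero, one_pow]
  exact div_ne_zero (key n hn) (by simpa using key 1 one_ne_zero)

lemma qint_eq_zpow (n : ℕ) : qint n = (s ^ (n : ℤ) - s ^ (-(n : ℤ))) / (s - s⁻¹) := by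
  rw [qint, zpow_natCast, zpow_neg, zpow_natCast, inv_pow]

lemma zpow_mul_qint_eq_add {a b c d n : ℕ} (h : a + b + c + d = n) :
    s ^ ((a : ℤ) + b - c) * qint n =
      qint d + s ^ ((n : ℤ) + a - c) * qint b + s ^ ((a : ℤ) + b - n) * qint c
        + s ^ ((n : ℤ) - b - c) * qint a := by
  subst h
  simp only [qint_eq_zpow, ← mul_div_assoc, ← add_div]
  congr 1
  simp only [mul_sub, ← zpow_add₀ s_ne_zero]
  push_cast
  ring_nf

lemma qfact_succ (n : ℕ) : qfact (n + 1) = qfact n * qint (n + 1) := rfl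

lemma qfact_ne_zero : ∀ n, qfact n ≠ 0
  | 0 => one_ne_zero
  | n + 1 => mul_ne_zero (qfact_ne_zero n) (qint_ne_zero n.succ_ne_zero)

lemma qmultinom_of_lt {N a b c : ℕ} (h : N < a + b + c) : qmultinom N a b c = 0 :=
  if_neg (by omega)

lemma qmultinom_swap_left (N a b c : ℕ) : qmultinom N a b c = qmultinom N b a c := by
  simp only [qmultinom, show a + b + c = b + a + c by ring,
    show N - a - b - c = N - b - a - c by omega, mul_comm (qfact a) (qfact b)]

lemma qmultinom_swap_right (N a b c : ℕ) : qmultinom N a b c = qmultinom N a c b := by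
  simp only [qmultinom, show a + b + c = a + c + b by ring,
    show N - a - b - c = N - a - c - b by omega, mul_right_comm _ (qfact b) (qfact c)]

lemma qint_mul_qmultinom_succ_left (N a b c : ℕ) :
    qint (N + 1) * qmultinom N a b c = qint (a + 1) * qmultinom (N + 1) (a + 1) b c := by
  by_cases h : a + b + c ≤ N
  · rw [qmultinom, if_pos h, qmultinom, if_pos (by omega), qfact_succ, qfact_succ,
      show N + 1 - (a + 1) - b - c = N - a - b - c by omega]
    field_simp [qfact_ne_zero, qint_ne_zero]
  · rw [qmultinom_of_lt (by omega), qmultinom_of_lt (by omega), mul_zero, mul_zero]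

lemma qint_mul_qmultinom_succ_middle (N a b c : ℕ) :
    qint (N + 1) * qmultinom N a b c = qint (b + 1) * qmultinom (N + 1) a (b + 1) c := by
  rw [qmultinom_swap_left, qint_mul_qmultinom_succ_left, qmultinom_swap_left]

lemma qint_mul_qmultinom_succ_right (N a b c : ℕ) :
    qint (N + 1) * qmultinom N a b c = qint (c + 1) * qmultinom (N + 1) a b (c + 1) := by
  rw [qmultinom_swap_right, qint_mul_qmultinom_succ_middle, qmultinom_swap_right]

lemma qint_mul_qmultinom_succ_rest (N a b c : ℕ) :
    qint (N + 1) * qmultinom N a b c = qint (N + 1 - a - b - c) * qmultinom (N + 1) a b c := by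
  by_cases h : a + b + c ≤ N
  · rw [qmultinom, if_pos h, qmultinom, if_pos (by omega), qfact_succ,
      show N + 1 - a - b - c = N - a - b - c + 1 by omega, qfact_succ (N - a - b - c)]
    field_simp [qfact_ne_zero, qint_ne_zero]
  · rw [qmultinom_of_lt (by omega), show N + 1 - a - b - c = 0 by omega, qint_zero,
      mul_zero, zero_mul]

def prevOrZero {M : Type*} [Zero M] (f : ℕ → M) : ℕ → M
  | 0 => 0
  | n + 1 => f n

@[simp] lemma prevOrZero_zero {M : Type*} [Zero M] (f : ℕ → M) : prevOrZero f 0 = 0 := rfl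

@[simp] lemma prevOrZero_succ {M : Type*} [Zero M] (f : ℕ → M) (n : ℕ) :
    prevOrZero f (n + 1) = f n := rfl

lemma mul_prevOrZero_eq_qint_mul {x : RatFunc ℚ} {f g : ℕ → RatFunc ℚ}
    (h : ∀ i, x * f i = qint (i + 1) * g (i + 1)) (i : ℕ) :
    x * prevOrZero f i = qint i * g i := by
  cases i with
  | zero => simp [qint_zero]
  | succ i => exact h i

lemma zpow_mul_qmultinom_succ (N a b c : ℕ) :
    s ^ ((a : ℤ) + b - c) * qmultinom (N + 1) a b c =
      qmultinom N a b c + s ^ ((N : ℤ) + 1 + a - c) * prevOrZero (qmultinom N a · c) b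
        + s ^ ((a : ℤ) + b - ((N : ℤ) + 1)) * prevOrZero (qmultinom N a b ·) c
        + s ^ ((N : ℤ) + 1 - b - c) * prevOrZero (qmultinom N · b c) a := by
  apply mul_left_cancel₀ (qint_ne_zero N.succ_ne_zero)
  have h0 := qint_mul_qmultinom_succ_rest N a b c
  have ha := mul_prevOrZero_eq_qint_mul (g := (qmultinom (N + 1) · b c))
    (fun a ↦ qint_mul_qmultinom_succ_left N a b c) a
  have hb := mul_prevOrZero_eq_qint_mul (g := (qmultinom (N + 1) a · c))
    (fun b ↦ qint_mul_qmultinom_succ_middle N a b c) b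
  have hc := mul_prevOrZero_eq_qint_mul (g := (qmultinom (N + 1) a b ·))
    (fun c ↦ qint_mul_qmultinom_succ_right N a b c) c
  have key : qmultinom (N + 1) a b c * (s ^ ((a : ℤ) + b - c) * qint (N + 1) -
      (qint (N + 1 - a - b - c) + s ^ ((N : ℤ) + 1 + a - c) * qint b
        + s ^ ((a : ℤ) + b - ((N : ℤ) + 1)) * qint c
        + s ^ ((N : ℤ) + 1 - b - c) * qint a)) = 0 := by
    by_cases h : a + b + c ≤ N + 1
    · have := zpow_mul_qint_eq_add (a := a) (b := b) (c := c) (d := N + 1 - a - b - c)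
        (n := N + 1) (by omega)
      push_cast at this
      rw [this, sub_self, mul_zero]
    · rw [qmultinom_of_lt (by omega), zero_mul]
  linear_combination key - h0 - s ^ ((N : ℤ) + 1 + a - c) * hb
    - s ^ ((a : ℤ) + b - ((N : ℤ) + 1)) * hc - s ^ ((N : ℤ) + 1 - b - c) * ha

def normalExponent (m : ℤ) (N a b c : ℕ) : ℤ :=
  (m + N - 1) * (a + b - c) + a * b + a * c - b * c

noncomputable def normalCoeff (m : ℤ) (N a b c : ℕ) : RatFunc ℚ :=
  s ^ normalExponent m N a b c * qmultinom N a b c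

lemma normalCoeff_of_lt {m : ℤ} {N a b c : ℕ} (h : N < a + b + c) :
    normalCoeff m N a b c = 0 := by
  rw [normalCoeff, qmultinom_of_lt h, mul_zero]

lemma zpow_mul_zpow_mul_prevOrZero {e : ℕ → ℤ} {x y : ℤ} (h : ∀ j, e (j + 1) + x = y + e j)
    (f : ℕ → RatFunc ℚ) (i : ℕ) :
    s ^ e i * (s ^ x * prevOrZero f i) = s ^ y * prevOrZero (fun j ↦ s ^ e j * f j) i := by
  cases i with
  | zero => simp
  | succ i => rw [prevOrZero_succ, prevOrZero_succ, ← mul_assoc, ← zpow_add₀ s_ne_zero, h,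
      zpow_add₀ s_ne_zero, mul_assoc]

lemma normalCoeff_succ (m : ℤ) (N a b c : ℕ) :
    normalCoeff m (N + 1) a b c = normalCoeff m N a b c
      + s ^ (m + 2 * N + 2 * a - 2 * c) * prevOrZero (normalCoeff m N a · c) b
      + s ^ (-(m + 2 * N) + 2 * a) * prevOrZero (normalCoeff m N a b ·) c
      + s ^ (m + 2 * N) * prevOrZero (normalCoeff m N · b c) a := by
  have hexp : normalExponent m (N + 1) a b c = normalExponent m N a b c + (a + b - c) := by
    simp only [normalExponent]
    push_cast
    ring
  rw [normalCoeff, hexp, zpow_add₀ s_ne_zero, mul_assoc, zpow_mul_qmultinom_succ,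
    mul_add, mul_add, mul_add]
  congr 1
  · congr 1
    · congr 1
      exact zpow_mul_zpow_mul_prevOrZero (e := (normalExponent m N a · c))
        (fun j ↦ by simp only [normalExponent]; push_cast; ring) _ b
    · exact zpow_mul_zpow_mul_prevOrZero (e := (normalExponent m N a b ·))
        (fun j ↦ by simp only [normalExponent]; push_cast; ring) _ c
  · exact zpow_mul_zpow_mul_prevOrZero (e := (normalExponent m N · b c))
      (fun j ↦ by simp only [normalExponent]; push_cast; ring) _ a

lemma sum_range_succ_eq_sum_range_of_eq_zero {M : Type*} [AddCommMonoid M] {f : ℕ → M} {n : ℕ}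
    (h0 : f 0 = 0) (hn : f n = 0) : ∑ i ∈ range n, f (i + 1) = ∑ i ∈ range n, f i := by
  have := sum_range_succ' f n
  rwa [sum_range_succ, hn, h0, add_zero, add_zero, eq_comm] at this

section NormalOrder

variable {R A : Type*} [CommSemiring R] [Semiring A] [Algebra R A]

lemma mul_eq_smul_mul_of_mul_eq_smul_mul {x y : A} {w w' : R} (hw : w' * w = 1)
    (h : x * y = w • (y * x)) : y * x = w' • (x * y) := by
  rw [h, smul_smul, hw, one_smul]

lemma pow_mul_eq_smul_mul_pow {x y : A} {q : R} (h : y * x = q • (x * y)) (n : ℕ) :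
    y ^ n * x = q ^ n • (x * y ^ n) := by
  induction n with
  | zero => simp
  | succ n ih =>
    rw [pow_succ, mul_assoc, h, mul_smul_comm, ← mul_assoc, ih, smul_mul_assoc, smul_smul,
      mul_assoc, ← pow_succ, ← pow_succ']

variable (xr xg xb : A)

def normalMonomial (a b c : ℕ) : A := xr ^ b * xg ^ c * xb ^ a

def normalSum (n : ℕ) : (ℕ → ℕ → ℕ → R) →ₗ[R] A where
  toFun C :=
    ∑ a ∈ range n, ∑ b ∈ range n, ∑ c ∈ range n, C a b c • normalMonomial xr xg xb a b c
  map_add' C D := by simp only [Pi.add_apply, add_smul, sum_add_distrib]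
  map_smul' r C := by simp only [Pi.smul_apply, smul_eq_mul, mul_smul, smul_sum, RingHom.id_apply]

lemma normalSum_apply (n : ℕ) (C : ℕ → ℕ → ℕ → R) :
    normalSum xr xg xb n C =
      ∑ a ∈ range n, ∑ b ∈ range n, ∑ c ∈ range n, C a b c • normalMonomial xr xg xb a b c :=
  rfl

variable {xr xg xb} {q₁ q₂ q₃ : R}

lemma normalMonomial_mul_xr (hbr : xb * xr = q₁ • (xr * xb)) (hgr : xg * xr = q₂ • (xr * xg))
    (a b c : ℕ) :
    normalMonomial xr xg xb a b c * xr =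
      (q₁ ^ a * q₂ ^ c) • normalMonomial xr xg xb a (b + 1) c := by
  simp only [normalMonomial, mul_assoc]
  rw [pow_mul_eq_smul_mul_pow hbr, mul_smul_comm, mul_smul_comm, ← mul_assoc (xg ^ c),
    pow_mul_eq_smul_mul_pow hgr, smul_mul_assoc, mul_smul_comm, smul_smul]
  simp only [pow_succ, mul_assoc]

lemma normalMonomial_mul_xg (hbg : xb * xg = q₃ • (xg * xb)) (a b c : ℕ) :
    normalMonomial xr xg xb a b c * xg = q₃ ^ a • normalMonomial xr xg xb a b (c + 1) := by
  simp only [normalMonomial, mul_assoc]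
  rw [pow_mul_eq_smul_mul_pow hbg, mul_smul_comm, mul_smul_comm, ← mul_assoc (xg ^ c),
    ← pow_succ]

lemma normalMonomial_mul_xb (a b c : ℕ) :
    normalMonomial xr xg xb a b c * xb = normalMonomial xr xg xb (a + 1) b c := by
  simp only [normalMonomial, mul_assoc, ← pow_succ]

variable {n : ℕ} {C : ℕ → ℕ → ℕ → R}

lemma normalSum_mul_xr (hbr : xb * xr = q₁ • (xr * xb)) (hgr : xg * xr = q₂ • (xr * xg))
    (hC : ∀ a c, C a n c = 0) :
    normalSum xr xg xb (n + 1) C * xr =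
      normalSum xr xg xb (n + 1) fun a b c ↦ q₁ ^ a * q₂ ^ c * prevOrZero (C a · c) b := by
  simp only [normalSum_apply, sum_mul, smul_mul_assoc, normalMonomial_mul_xr hbr hgr, smul_smul]
  refine sum_congr rfl fun a _ ↦ .trans ?_ (sum_range_succ_eq_sum_range_of_eq_zero ?_ ?_)
  · simp only [prevOrZero_succ, mul_comm]
  · simp
  · simp [hC]

lemma normalSum_mul_xg (hbg : xb * xg = q₃ • (xg * xb)) (hC : ∀ a b, C a b n = 0) :
    normalSum xr xg xb (n + 1) C * xg =
      normalSum xr xg xb (n + 1) fun a b c ↦ q₃ ^ a * prevOrZero (C a b ·) c := by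
  simp only [normalSum_apply, sum_mul, smul_mul_assoc, normalMonomial_mul_xg hbg, smul_smul]
  refine sum_congr rfl fun a _ ↦ sum_congr rfl fun b _ ↦
    .trans ?_ (sum_range_succ_eq_sum_range_of_eq_zero ?_ ?_)
  · simp only [prevOrZero_succ, mul_comm]
  · simp
  · simp [hC]

lemma normalSum_mul_xb (hC : ∀ b c, C n b c = 0) :
    normalSum xr xg xb (n + 1) C * xb =
      normalSum xr xg xb (n + 1) fun a b c ↦ prevOrZero (C · b c) a := by
  simp only [normalSum_apply, sum_mul, smul_mul_assoc, normalMonomial_mul_xb]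
  refine .trans ?_ (sum_range_succ_eq_sum_range_of_eq_zero ?_ ?_)
  · simp only [prevOrZero_succ]
  · simp
  · simp [hC]

lemma normalSum_mul_factor (hbr : xb * xr = q₁ • (xr * xb)) (hgr : xg * xr = q₂ • (xr * xg))
    (hbg : xb * xg = q₃ • (xg * xb)) (hC : ∀ a b c, n ≤ a + b + c → C a b c = 0) (u v w : R) :
    normalSum xr xg xb (n + 1) C * (1 + u • xr + v • xg + w • xb) =
      normalSum xr xg xb (n + 1) (C + u • (fun a b c ↦ q₁ ^ a * q₂ ^ c * prevOrZero (C a · c) b)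
        + v • (fun a b c ↦ q₃ ^ a * prevOrZero (C a b ·) c)
        + w • fun a b c ↦ prevOrZero (C · b c) a) := by
  rw [map_add, map_add, map_add, map_smul, map_smul, map_smul,
    ← normalSum_mul_xr hbr hgr fun a c ↦ hC a n c (by omega),
    ← normalSum_mul_xg hbg fun a b ↦ hC a b n (by omega),
    ← normalSum_mul_xb fun b c ↦ hC n b c (by omega)]
  simp only [mul_add, mul_one, mul_smul_comm]

end NormalOrder

section Expansion

variable {A : Type*} [Semiring A] [Algebra (RatFunc ℚ) A] {xr xg xb : A}

/-- The factors of the main theorem depend on `N`, so the induction runs over products with an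
arbitrary first exponent `m`; the box `range (n + 1)` stays fixed, and `N ≤ n` ensures that
shifting an exponent never leaves it. -/
theorem prod_factor_eq_normalSum (hbr : xb * xr = s ^ (2 : ℤ) • (xr * xb))
    (hgr : xg * xr = s ^ (-2 : ℤ) • (xr * xg)) (hbg : xb * xg = s ^ (2 : ℤ) • (xg * xb))
    (m : ℤ) {N n : ℕ} (hN : N ≤ n) :
    ((List.range N).map fun k : ℕ ↦
        1 + s ^ (m + 2 * k) • xr + s ^ (-(m + 2 * k)) • xg + s ^ (m + 2 * k) • xb).prod =
      normalSum xr xg xb (n + 1) (normalCoeff m N) := by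
  induction N with
  | zero =>
    have h0 (a b c : ℕ) : normalCoeff m 0 a b c = if a = 0 ∧ b = 0 ∧ c = 0 then 1 else 0 := by
      split_ifs with h
      · obtain ⟨rfl, rfl, rfl⟩ := h
        simp [normalCoeff, normalExponent, qmultinom, qfact]
      · exact normalCoeff_of_lt (by omega)
    simp [normalSum_apply, h0, ite_and, normalMonomial]
  | succ N ih =>
    rw [List.range_succ, List.map_append, List.prod_append, ih (by omega), List.map_singleton,
      List.prod_singleton,
      normalSum_mul_factor hbr hgr hbg fun a b c h ↦ normalCoeff_of_lt (by omega)]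
    congr 1
    funext a b c
    simp only [Pi.add_apply, Pi.smul_apply, smul_eq_mul, normalCoeff_succ]
    simp only [← zpow_natCast, ← zpow_mul, ← mul_assoc, ← zpow_add₀ s_ne_zero]
    ring_nf

end Expansion

/-- (Theorem 2 for the tetrahedron graph.)  Let `x_r, x_g, x_b`
be elements of a (noncommutative) `ℤ[q^{±1/2}]`-algebra `A` (realized as an algebra
over `K = ℚ(q^{1/2})`, so `q = s²` is central and invertible) satisfying
`x_r x_g = q x_g x_r`, `x_r x_b = q⁻¹ x_b x_r`, `x_g x_b = q⁻¹ x_b x_g`.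
Then the ordered product `∏_{j ∈ A_N} (1 + q^j x_r + q^{-j} x_g + q^j x_b)` over
`A_N = {-(N-1)/2, …, (N-1)/2}` in increasing order (`q^j = s^(1-N+2k)`, `k = 0,…,N-1`),
written in the normal order `x_r^b x_g^c x_b^a` up to a power of `q^{1/2}` (the exponent
`e a b c`), has total coefficient of `x_r^b x_g^c x_b^a` the symmetric quantum
multinomial `[N]!/([a]![b]![c]![N-a-b-c]!)`. -/
theorem tetrahedron_quantum_product (N : ℕ) (A : Type*) [Ring A]
    [Algebra (RatFunc ℚ) A] (xr xg xb : A)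
    (hrg : xr * xg = algebraMap (RatFunc ℚ) A (s ^ 2) * (xg * xr))
    (hrb : xr * xb = algebraMap (RatFunc ℚ) A (s ^ (-2 : ℤ)) * (xb * xr))
    (hgb : xg * xb = algebraMap (RatFunc ℚ) A (s ^ (-2 : ℤ)) * (xb * xg)) :
    ∃ e : ℕ → ℕ → ℕ → ℤ,
      ((List.range N).map fun k =>
          1 + algebraMap (RatFunc ℚ) A (s ^ (1 - (N : ℤ) + 2 * k)) * xr
            + algebraMap (RatFunc ℚ) A (s ^ (-(1 - (N : ℤ) + 2 * k))) * xg
            + algebraMap (RatFunc ℚ) A (s ^ (1 - (N : ℤ) + 2 * k)) * xb).prod =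
        ∑ p ∈ range (N + 1) ×ˢ range (N + 1) ×ˢ range (N + 1),
          algebraMap (RatFunc ℚ) A (s ^ e p.1 p.2.1 p.2.2 * qmultinom N p.1 p.2.1 p.2.2) *
            (xr ^ p.2.1 * xg ^ p.2.2 * xb ^ p.1) := by
  have hinv : s ^ (2 : ℤ) * s ^ (-2 : ℤ) = 1 := by rw [← zpow_add₀ s_ne_zero]; norm_num
  have hinv' : s ^ (-2 : ℤ) * s ^ 2 = 1 := by
    rw [zpow_neg, zpow_ofNat, inv_mul_cancel₀ (pow_ne_zero 2 s_ne_zero)]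
  rw [← Algebra.smul_def] at hrg hrb hgb
  have hexp := prod_factor_eq_normalSum (mul_eq_smul_mul_of_mul_eq_smul_mul hinv hrb)
    (mul_eq_smul_mul_of_mul_eq_smul_mul hinv' hrg) (mul_eq_smul_mul_of_mul_eq_smul_mul hinv hgb)
    (1 - N) (le_refl N)
  refine ⟨fun a b c ↦ a * b + a * c - b * c, ?_⟩
  -- the statement's `k` ranges over `List.range N` lifted to `List ℤ`
  rw [show ((List.range N : List ℕ) : List ℤ) = (List.range N).map (↑) from
    List.flatMap_pure_eq_map _ _, List.map_map]
  simp only [← Algebra.smul_def, Function.comp_def, sum_product]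
  rw [hexp, normalSum_apply]
  refine sum_congr rfl fun a _ ↦ sum_congr rfl fun b _ ↦ sum_congr rfl fun c _ ↦ ?_
  rw [normalCoeff, normalExponent, normalMonomial]
  ring_nf
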